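/- Let M be a DFA representing a (Σ, 𝒳)-spanner with non-tail-spanning language, let 𝒮 be an SLP with start symbol S₀ deriving document d, and let F' = {j ∈ F : T_{S₀}[1, j] ≠ ∅}. Then ⟦M⟧(d) is the disjoint union over j ∈ F' and k ∈ I_{S₀}[1, j] of the sets D_{j,k} = {Λ_B ∪ (Λ_C + |deriv(B)|) : Λ_B ∈ T_B[1, k], Λ_C ∈ T_C[k, j]}, where S₀ → BC is the rule for S₀ and I_{S₀}[1, j] = {k : T_B[1, k] ≠ ∅ and T_C[k, j] ≠ ∅}. That is, these sets cover ⟦M⟧(d) and are pairwise disjoint. -/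

import Mathlib

/-- A non-tail-spanning marked word `A₁ b₁ A₂ b₂ … Aₙ bₙ` (the trailing set symbol
`A_{n+1}` is empty and omitted). -/
abbrev MWord (Γ Alph : Type*) := List (Finset Γ × Alph)

/-- The `s`-rightshift of a partial marker set. -/
def rshift {Γ : Type*} [DecidableEq Γ] (Λ : Finset (Γ × ℕ)) (s : ℕ) : Finset (Γ × ℕ) :=
  Λ.image (fun p => (p.1, p.2 + s))

/-- Insert the markers of `Λ` into the document `d` (positions `> |d|` are not placed;
for non-tail-spanning `Λ` no marker is lost). -/
def ins {Γ Alph : Type*} [DecidableEq Γ] (d : List Alph) (Λ : Finset (Γ × ℕ)) :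
    MWord Γ Alph :=
  (d.zipIdx.map Prod.swap).map (fun ib => ((Λ.filter (fun p => p.2 = ib.1 + 1)).image Prod.fst, ib.2))

/-- Erase all set symbols. -/
def getWord {Γ Alph : Type*} (w : MWord Γ Alph) : List Alph := w.map Prod.snd

/-- The partial marker set `{(σ, i) : σ ∈ Aᵢ}` encoded by a marked word. -/
def mkd {Γ Alph : Type*} [DecidableEq Γ] (w : MWord Γ Alph) : Finset (Γ × ℕ) :=
  ((w.zipIdx.map Prod.swap).map (fun ib => ib.2.1.image (fun σ => (σ, ib.1 + 1)))).foldr (· ∪ ·) ∅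

/-- Serialize a marked word into the sequence of symbols (over `𝒫(Γ_𝒳) ∪ Σ`) read
by an automaton: `A₁, b₁, A₂, b₂, …, Aₙ, bₙ`. -/
def ser {Γ Alph : Type*} (w : MWord Γ Alph) : List (Finset Γ ⊕ Alph) :=
  w.flatMap (fun Ab => [Sum.inl Ab.1, Sum.inr Ab.2])

/-- `T_X[p, q]` for a DFA. -/
def TsetD {Γ Alph Q : Type*} [DecidableEq Γ] (δ : Q → (Finset Γ ⊕ Alph) → Q)
    (w : List Alph) (i j : Q) : Set (Finset (Γ × ℕ)) :=
  {Λ | (∀ p ∈ Λ, 1 ≤ p.2 ∧ p.2 ≤ w.length + 1) ∧ (∀ p ∈ Λ, p.2 ≠ w.length + 1) ∧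
    (ser (ins w Λ)).foldl δ i = j}

/-- `D_{j,k}` for the start rule `S₀ → BC` with `wB = deriv(B)`, `wC = deriv(C)`. -/
def Dset {Γ Alph Q : Type*} [DecidableEq Γ] (δ : Q → (Finset Γ ⊕ Alph) → Q)
    (wB wC : List Alph) (q1 k j : Q) : Set (Finset (Γ × ℕ)) :=
  {Λ | ∃ ΛB ∈ TsetD δ wB q1 k, ∃ ΛC ∈ TsetD δ wC k j, Λ = ΛB ∪ rshift ΛC wB.length}

/-- The spanner result of the DFA `M` on document `d`. -/
def spanResD {Γ Alph Q : Type*} [DecidableEq Γ] (δ : Q → (Finset Γ ⊕ Alph) → Q)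
    (q1 : Q) (F : Set Q) (d : List Alph) : Set (Finset (Γ × ℕ)) :=
  {S | ∃ w : MWord Γ Alph, (ser w).foldl δ q1 ∈ F ∧ getWord w = d ∧ mkd w = S}


/-!
A marked word is determined by its document and its marker set (`ins` and `mkd` are mutually
inverse), so `⟦M⟧(d)` is the union of the sets `T_{S₀}[1, j]` over accepting `j`. Marker insertion
commutes with concatenation, so a run of `M` on `ins (wB ++ wC) Λ` passes through the state `k`
reached on the markers of `Λ` at positions `≤ |wB|`; the remaining markers, shifted back by `|wB|`,
lead from `k` to `j` on `wC`. Hence `T_{S₀}[1, j] = ⋃ₖ D_{j,k}`. By determinism both `j` and `k`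
are functions of `Λ`, which gives disjointness.
-/
lemma List.mem_foldr_union {α : Type*} [DecidableEq α] (l : List (Finset α)) (a : α) :
    a ∈ l.foldr (· ∪ ·) ∅ ↔ ∃ s ∈ l, a ∈ s := by
  induction l with
  | nil => simp
  | cons h t ih => simp [ih]

lemma ser_append {Γ Alph : Type*} (u v : MWord Γ Alph) : ser (u ++ v) = ser u ++ ser v :=
  List.flatMap_append

section Shift

variable {Γ : Type*} [DecidableEq Γ]

def lshift (Λ : Finset (Γ × ℕ)) (s : ℕ) : Finset (Γ × ℕ) :=
  (Λ.filter (s < ·.2)).image fun p => (p.1, p.2 - s)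

lemma mem_rshift_add {Λ : Finset (Γ × ℕ)} {s : ℕ} {σ : Γ} {n : ℕ} :
    (σ, n + s) ∈ rshift Λ s ↔ (σ, n) ∈ Λ := by
  simp [rshift]

lemma mem_rshift {Λ : Finset (Γ × ℕ)} {s : ℕ} {p : Γ × ℕ} :
    p ∈ rshift Λ s ↔ s ≤ p.2 ∧ (p.1, p.2 - s) ∈ Λ := by
  obtain ⟨σ, n⟩ := p
  constructor
  · simp only [rshift, Finset.mem_image, Prod.mk.injEq]
    rintro ⟨⟨τ, m⟩, hm, rfl, rfl⟩
    simpa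
  · rintro ⟨hs, h⟩
    simpa [Nat.sub_add_cancel hs] using (mem_rshift_add (s := s)).2 h

lemma mem_lshift {Λ : Finset (Γ × ℕ)} {s : ℕ} {σ : Γ} {n : ℕ} :
    (σ, n) ∈ lshift Λ s ↔ 1 ≤ n ∧ (σ, n + s) ∈ Λ := by
  simp only [lshift, Finset.mem_image, Finset.mem_filter, Prod.mk.injEq]
  constructor
  · rintro ⟨⟨τ, m⟩, ⟨hm, hsm⟩, rfl, rfl⟩
    exact ⟨by omega, by rwa [Nat.sub_add_cancel hsm.le]⟩
  · rintro ⟨hn, hσ⟩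
    exact ⟨(σ, n + s), ⟨hσ, by simp; omega⟩, rfl, by simp⟩

lemma filter_union_rshift_lshift (Λ : Finset (Γ × ℕ)) (s : ℕ) :
    Λ.filter (·.2 ≤ s) ∪ rshift (lshift Λ s) s = Λ := by
  ext ⟨σ, n⟩
  rw [Finset.mem_union, Finset.mem_filter, mem_rshift, mem_lshift]
  by_cases h : n ≤ s
  · simp [h]
  · simp only [h, and_false, false_or]
    rw [Nat.sub_add_cancel (by omega)]
    exact ⟨fun h => h.2.2, fun hσ => ⟨by omega, by omega, hσ⟩⟩

lemma filter_union_rshift {ΛB ΛC : Finset (Γ × ℕ)} {s : ℕ} (hB : ∀ p ∈ ΛB, p.2 ≤ s)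
    (hC : ∀ p ∈ ΛC, 1 ≤ p.2) : (ΛB ∪ rshift ΛC s).filter (·.2 ≤ s) = ΛB := by
  rw [Finset.filter_union, Finset.filter_true_of_mem hB, Finset.filter_false_of_mem,
    Finset.union_empty]
  intro p hp
  obtain ⟨hs, hpC⟩ := mem_rshift.1 hp
  have := hC _ hpC
  simp only at this
  omega

end Shift

section MarkedWord

variable {Γ Alph : Type*} [DecidableEq Γ]

@[simp] lemma length_ins (d : List Alph) (Λ : Finset (Γ × ℕ)) :
    (ins d Λ).length = d.length := by
  simp [ins]

lemma getElem_ins (d : List Alph) (Λ : Finset (Γ × ℕ)) (i : ℕ) (h : i < (ins d Λ).length) :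
    (ins d Λ)[i] = ((Λ.filter (·.2 = i + 1)).image Prod.fst, d[i]'(by simpa using h)) := by
  simp [ins]

lemma mem_getElem_ins_fst {d : List Alph} {Λ : Finset (Γ × ℕ)} {i : ℕ}
    (h : i < (ins d Λ).length) {σ : Γ} : σ ∈ ((ins d Λ)[i]).1 ↔ (σ, i + 1) ∈ Λ := by
  simp [getElem_ins]

lemma getWord_ins (d : List Alph) (Λ : Finset (Γ × ℕ)) : getWord (ins d Λ) = d :=
  List.ext_getElem (by simp [getWord]) fun i _ _ => by simp [getWord, getElem_ins]

lemma mem_mkd {w : MWord Γ Alph} {σ : Γ} {n : ℕ} :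
    (σ, n) ∈ mkd w ↔ ∃ i, ∃ h : i < w.length, n = i + 1 ∧ σ ∈ (w[i]).1 := by
  simp only [mkd, List.mem_foldr_union, List.map_map, List.mem_map]
  constructor
  · rintro ⟨s, ⟨⟨Ab, i⟩, hmem, rfl⟩, hs⟩
    obtain ⟨hi, rfl⟩ := List.getElem?_eq_some_iff.1 (List.mk_mem_zipIdx_iff_getElem?.1 hmem)
    obtain ⟨τ, hτ, h⟩ := Finset.mem_image.1 hs
    simp only [Prod.mk.injEq] at h
    obtain ⟨rfl, rfl⟩ := h
    exact ⟨i, hi, rfl, hτ⟩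
  · rintro ⟨i, hi, rfl, hσ⟩
    exact ⟨_, ⟨(w[i], i), List.mk_mem_zipIdx_iff_getElem?.2 (List.getElem?_eq_getElem hi), rfl⟩,
      Finset.mem_image.2 ⟨σ, hσ, rfl⟩⟩

lemma mkd_ins {d : List Alph} {Λ : Finset (Γ × ℕ)} (hΛ : ∀ p ∈ Λ, 1 ≤ p.2 ∧ p.2 ≤ d.length) :
    mkd (ins d Λ) = Λ := by
  ext ⟨σ, n⟩
  rw [mem_mkd]
  constructor
  · rintro ⟨i, hi, rfl, hσ⟩
    exact (mem_getElem_ins_fst hi).1 hσ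
  · intro hn
    obtain ⟨h1, h2⟩ := hΛ _ hn
    refine ⟨n - 1, by simp; omega, by omega, (mem_getElem_ins_fst _).2 ?_⟩
    rwa [Nat.sub_add_cancel h1]

lemma ins_getWord_mkd (w : MWord Γ Alph) : ins (getWord w) (mkd w) = w := by
  refine List.ext_getElem (by simp [getWord]) fun i hi hi' => Prod.ext ?_ ?_
  · ext σ
    rw [mem_getElem_ins_fst, mem_mkd]
    constructor
    · rintro ⟨j, hj, hji, hσ⟩
      obtain rfl : i = j := by omega
      exact hσ
    · exact fun hσ => ⟨i, hi', rfl, hσ⟩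
  · simp [getElem_ins, getWord]

lemma ins_append {wB wC : List Alph} {ΛB ΛC : Finset (Γ × ℕ)}
    (hB : ∀ p ∈ ΛB, p.2 ≤ wB.length) (hC : ∀ p ∈ ΛC, 1 ≤ p.2) :
    ins (wB ++ wC) (ΛB ∪ rshift ΛC wB.length) = ins wB ΛB ++ ins wC ΛC := by
  refine List.ext_getElem (by simp) fun i hi hi' => Prod.ext ?_ ?_
  · ext σ
    rw [mem_getElem_ins_fst, Finset.mem_union, mem_rshift, List.getElem_append]
    split_ifs with h
    · rw [mem_getElem_ins_fst, or_iff_left]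
      rintro ⟨hs, hσ⟩
      have := hC _ hσ
      simp only [length_ins] at h this
      omega
    · rw [mem_getElem_ins_fst, or_iff_right]
      · simp only [length_ins, not_lt] at h ⊢
        rw [Nat.sub_add_comm h]
        exact and_iff_right (by omega)
      · intro hσ
        have := hB _ hσ
        simp only [length_ins] at h this
        omega
  · simp only [getElem_ins, List.getElem_append, length_ins]
    split_ifs <;> rfl

end MarkedWord

section Automaton

variable {Γ Alph Q : Type*} [DecidableEq Γ] {δ : Q → (Finset Γ ⊕ Alph) → Q}

lemma mem_TsetD_iff {w : List Alph} {q q' : Q} {Λ : Finset (Γ × ℕ)} :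
    Λ ∈ TsetD δ w q q' ↔
      (∀ p ∈ Λ, 1 ≤ p.2 ∧ p.2 ≤ w.length) ∧ (ser (ins w Λ)).foldl δ q = q' := by
  refine ⟨fun ⟨hpos, hnt, hrun⟩ => ⟨fun p hp => ?_, hrun⟩,
    fun ⟨hpos, hrun⟩ => ⟨fun p hp => ?_, fun p hp => ?_, hrun⟩⟩ <;>
  · have := hpos p hp
    try have := hnt p hp
    omega

lemma TsetD_disjoint {w : List Alph} {q j j' : Q} (h : j ≠ j') :
    Disjoint (TsetD δ w q j) (TsetD δ w q j') :=
  Set.disjoint_left.2 fun _ hj hj' => h ((mem_TsetD_iff.1 hj).2.symm.trans (mem_TsetD_iff.1 hj').2)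

theorem spanResD_eq_biUnion_TsetD (q : Q) (F : Set Q) (d : List Alph) :
    spanResD δ q F d = ⋃ j ∈ F, TsetD δ d q j := by
  ext S
  simp only [spanResD, Set.mem_iUnion, mem_TsetD_iff, exists_prop]
  constructor
  · rintro ⟨w, hacc, rfl, rfl⟩
    refine ⟨_, hacc, fun ⟨σ, n⟩ hp => ?_, by rw [ins_getWord_mkd]⟩
    obtain ⟨i, hi, rfl, -⟩ := mem_mkd.1 hp
    simp only [getWord, List.length_map]
    omega
  · rintro ⟨j, hj, hpos, rfl⟩
    exact ⟨ins d S, hj, getWord_ins d S, mkd_ins hpos⟩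

lemma union_rshift_mem_TsetD {wB wC : List Alph} {q k j : Q} {ΛB ΛC : Finset (Γ × ℕ)}
    (hB : ΛB ∈ TsetD δ wB q k) (hC : ΛC ∈ TsetD δ wC k j) :
    ΛB ∪ rshift ΛC wB.length ∈ TsetD δ (wB ++ wC) q j := by
  obtain ⟨hBpos, hBrun⟩ := mem_TsetD_iff.1 hB
  obtain ⟨hCpos, hCrun⟩ := mem_TsetD_iff.1 hC
  refine mem_TsetD_iff.2 ⟨fun ⟨σ, n⟩ hp => ?_, ?_⟩
  · rcases Finset.mem_union.1 hp with hp | hp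
    · have := hBpos _ hp
      simp only [List.length_append] at this ⊢
      omega
    · obtain ⟨hs, hp⟩ := mem_rshift.1 hp
      have := hCpos _ hp
      simp only [List.length_append] at this ⊢
      omega
  · rw [ins_append (fun p hp => (hBpos p hp).2) (fun p hp => (hCpos p hp).1), ser_append,
      List.foldl_append, hBrun, hCrun]

lemma TsetD_append_eq_iUnion_Dset (wB wC : List Alph) (q j : Q) :
    TsetD δ (wB ++ wC) q j = ⋃ k, Dset δ wB wC q k j := by
  refine Set.Subset.antisymm (fun Λ hΛ => ?_) ?_
  · obtain ⟨hpos, hrun⟩ := mem_TsetD_iff.1 hΛ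
    set ΛB := Λ.filter (·.2 ≤ wB.length)
    set ΛC := lshift Λ wB.length
    have hsplit : Λ = ΛB ∪ rshift ΛC wB.length := (filter_union_rshift_lshift Λ _).symm
    have hBpos : ∀ p ∈ ΛB, 1 ≤ p.2 ∧ p.2 ≤ wB.length := fun p hp => by
      obtain ⟨hp, hle⟩ := Finset.mem_filter.1 hp
      exact ⟨(hpos p hp).1, hle⟩
    have hCpos : ∀ p ∈ ΛC, 1 ≤ p.2 ∧ p.2 ≤ wC.length := fun ⟨σ, n⟩ hp => by
      obtain ⟨hn, hp⟩ := mem_lshift.1 hp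
      have := hpos _ hp
      simp only [List.length_append] at this ⊢
      omega
    refine Set.mem_iUnion.2 ⟨_, ΛB, mem_TsetD_iff.2 ⟨hBpos, rfl⟩, ΛC, mem_TsetD_iff.2 ⟨hCpos, ?_⟩,
      hsplit⟩
    rw [← hrun, hsplit, ins_append (fun p hp => (hBpos p hp).2) (fun p hp => (hCpos p hp).1),
      ser_append, List.foldl_append]
  · exact Set.iUnion_subset fun k => fun Λ ⟨ΛB, hB, ΛC, hC, hΛ⟩ => hΛ ▸ union_rshift_mem_TsetD hB hC

lemma Dset_subset_TsetD (wB wC : List Alph) (q k j : Q) :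
    Dset δ wB wC q k j ⊆ TsetD δ (wB ++ wC) q j := by
  rw [TsetD_append_eq_iUnion_Dset]
  exact Set.subset_iUnion (Dset δ wB wC q · j) k

lemma foldl_ser_ins_filter_of_mem_Dset {wB wC : List Alph} {q k j : Q} {Λ : Finset (Γ × ℕ)}
    (h : Λ ∈ Dset δ wB wC q k j) :
    (ser (ins wB (Λ.filter (·.2 ≤ wB.length)))).foldl δ q = k := by
  obtain ⟨ΛB, hB, ΛC, hC, rfl⟩ := h
  rw [filter_union_rshift (fun p hp => ((mem_TsetD_iff.1 hB).1 p hp).2)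
    fun p hp => ((mem_TsetD_iff.1 hC).1 p hp).1]
  exact (mem_TsetD_iff.1 hB).2

lemma Dset_disjoint {wB wC : List Alph} {q k k' j j' : Q} (h : k ≠ k') :
    Disjoint (Dset δ wB wC q k j) (Dset δ wB wC q k' j') :=
  Set.disjoint_left.2 fun _ hΛ hΛ' => h <|
    (foldl_ser_ins_filter_of_mem_Dset hΛ).symm.trans (foldl_ser_ins_filter_of_mem_Dset hΛ')

end Automaton

/-- Let `M` be a DFA (initial state `q1`, accepting states `F`) representing a
non-tail-spanning spanner, and let the start rule be `S₀ → BC`, so the document is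
`d = wB ++ wC`. With `F' = {j ∈ F : T_{S₀}[1, j] ≠ ∅}` and
`I[1, j] = {k : T_B[1, k] ≠ ∅ ∧ T_C[k, j] ≠ ∅}`, the sets `D_{j,k}`
(`j ∈ F'`, `k ∈ I[1, j]`) cover `⟦M⟧(d)` and are pairwise disjoint. -/
theorem spanResD_eq_disjoint_union {Γ Alph Q : Type*} [DecidableEq Γ]
    (δ : Q → (Finset Γ ⊕ Alph) → Q) (q1 : Q) (F : Set Q) (wB wC : List Alph)
    (F' : Set Q) (hF' : F' = {j | j ∈ F ∧ (TsetD δ (wB ++ wC) q1 j).Nonempty})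
    (I : Q → Set Q)
    (hI : ∀ j, I j = {k | (TsetD δ wB q1 k).Nonempty ∧ (TsetD δ wC k j).Nonempty}) :
    (spanResD δ q1 F (wB ++ wC) = ⋃ j ∈ F', ⋃ k ∈ I j, Dset δ wB wC q1 k j) ∧
    (∀ j ∈ F', ∀ j' ∈ F', ∀ k ∈ I j, ∀ k' ∈ I j', (j, k) ≠ (j', k') →
      Disjoint (Dset δ wB wC q1 k j) (Dset δ wB wC q1 k' j')) := by
  refine ⟨?_, fun j _ j' _ k _ k' _ hne => ?_⟩
  · simp_rw [spanResD_eq_biUnion_TsetD, TsetD_append_eq_iUnion_Dset]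
    ext Λ
    simp only [Set.mem_iUnion, exists_prop, hF', hI, Set.mem_ofPred_eq]
    constructor
    · rintro ⟨j, hj, k, hΛ⟩
      have ⟨ΛB, hB, ΛC, hC, _⟩ := hΛ
      exact ⟨j, ⟨hj, Λ, Dset_subset_TsetD _ _ _ _ _ hΛ⟩, k, ⟨⟨ΛB, hB⟩, ΛC, hC⟩, hΛ⟩
    · rintro ⟨j, ⟨hj, -⟩, k, -, hΛ⟩
      exact ⟨j, hj, k, hΛ⟩
  · by_cases hj : j = j'
    · subst hj
      exact Dset_disjoint fun hk => hne (by rw [hk])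
    · exact (TsetD_disjoint hj).mono (Dset_subset_TsetD _ _ _ _ _) (Dset_subset_TsetD _ _ _ _ _)
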